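/- In a traced balanced extensional BC±I-algebra, for all elements a, f, b: a ∘ (Tr f) = Tr((B a) ∘ f) and Tr(f ∘ (B b)) = (Tr f) ∘ b; consequently Tr((B a) ∘ f ∘ (B b)) = a ∘ (Tr f) ∘ b. -/
import Mathlib


namespace Paper

/-- An applicative structure with distinguished elements `B`, `C⁺`, `C⁻`, `I`. -/
structure BCStruct (α : Type*) where
  ap : α → α → α
  B : α
  Cp : α
  Cm : α
  I : α

namespace BCStruct

variable {α : Type*}

/-- `a ∘ b := B a b`. -/
def comp (S : BCStruct α) (a b : α) : α := S.ap (S.ap S.B a) b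

/-- Powers: `a⁰ = I`, `a^(n+1) = a ∘ aⁿ`. -/
def pow (S : BCStruct α) (a : α) : ℕ → α
  | 0 => S.I
  | n + 1 => S.comp a (S.pow a n)

/-- `a• := C⁺ I a`. -/
def bul (S : BCStruct α) (a : α) : α := S.ap (S.ap S.Cp S.I) a

/-- `a` has arity `m → n` iff `(C⁺ B a) ∘ Bᵐ = (B a) ∘ Bⁿ`. -/
def hasArity (S : BCStruct α) (a : α) (m n : ℕ) : Prop :=
  S.comp (S.ap (S.ap S.Cp S.B) a) (S.pow S.B m) = S.comp (S.ap S.B a) (S.pow S.B n)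

/-- The axioms of an extensional BC±I-algebra. -/
structure IsExt (S : BCStruct α) : Prop where
  hB : ∀ a b c, S.ap (S.ap (S.ap S.B a) b) c = S.ap a (S.ap b c)
  hCp : ∀ a b c, S.ap (S.ap (S.ap S.Cp a) b) c = S.ap (S.ap a c) b
  hCm : ∀ a b c, S.ap (S.ap (S.ap S.Cm a) b) c = S.ap (S.ap a c) b
  hI : ∀ a, S.ap S.I a = a
  hC2 : ∀ a b, S.ap (S.ap S.Cp a) b = S.ap (S.ap S.Cm a) b
  hLam : S.ap S.B S.I = S.I
  hRho : S.ap (S.ap S.Cp S.B) S.I = S.ap S.B S.I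
  hAlpha : S.comp (S.ap (S.ap S.Cp S.B) S.B) (S.comp S.B S.B) = S.comp (S.ap S.B S.B) S.B
  hCox1p : S.comp S.Cp S.Cm = S.ap S.B (S.ap S.B S.I)
  hCox1m : S.comp S.Cm S.Cp = S.ap S.B (S.ap S.B S.I)
  hCox2p : S.comp (S.ap (S.ap S.Cp S.B) S.Cp) (S.comp S.B S.B)
      = S.comp (S.ap S.B S.Cp) (S.comp S.B S.B)
  hCox2m : S.comp (S.ap (S.ap S.Cp S.B) S.Cm) (S.comp S.B S.B)
      = S.comp (S.ap S.B S.Cm) (S.comp S.B S.B)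
  hCox3p : S.comp (S.ap S.B S.Cp) (S.comp S.Cp (S.ap S.B S.Cp))
      = S.comp S.Cp (S.comp (S.ap S.B S.Cp) S.Cp)
  hCox3m : S.comp (S.ap S.B S.Cm) (S.comp S.Cm (S.ap S.B S.Cm))
      = S.comp S.Cm (S.comp (S.ap S.B S.Cm) S.Cm)
  hBCp : S.comp (S.ap S.B S.B) S.Cp = S.comp S.Cp (S.comp (S.ap S.B S.Cp) S.B)
  hBCm : S.comp (S.ap S.B S.B) S.Cm = S.comp S.Cm (S.comp (S.ap S.B S.Cm) S.B)

/-- The axioms for twists `θ⁺ = tp`, `θ⁻ = tm` making the algebra balanced. -/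
structure IsBalanced (S : BCStruct α) (tp tm : α) : Prop where
  arP : S.comp (S.ap S.B tp) S.B = S.comp (S.ap (S.ap S.Cp S.B) tp) S.B
  arM : S.comp (S.ap S.B tm) S.B = S.comp (S.ap (S.ap S.Cp S.B) tm) S.B
  invPM : S.comp tp tm = S.ap S.B S.I
  invMP : S.comp tm tp = S.ap S.B S.I
  natBulP : ∀ a, S.ap (S.ap S.Cp tp) a = S.ap (S.ap S.Cp S.I) a
  natBulM : ∀ a, S.ap (S.ap S.Cp tm) a = S.ap (S.ap S.Cp S.I) a
  natBP : S.comp S.B tp = S.comp tp (S.comp S.Cp (S.comp tp (S.comp S.Cp S.B)))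
  natBM : S.comp S.B tm = S.comp tm (S.comp S.Cm (S.comp tm (S.comp S.Cm S.B)))

/-- The axioms for a trace combinator `Tr` (Left/Right Tightening, Yanking, Exchange). -/
structure IsTrace (S : BCStruct α) (tp tm Tr : α) : Prop where
  leftT : S.comp (S.ap (S.ap S.Cp S.B) Tr) S.B = S.comp (S.ap S.B Tr) (S.pow S.B 2)
  rightT : S.comp (S.ap S.B Tr) (S.comp (S.ap (S.ap S.Cp S.B) S.B) S.B) = S.comp S.B Tr
  yankP : S.ap Tr S.Cp = tp
  yankM : S.ap Tr S.Cm = tm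
  exch : S.comp (S.comp (S.comp Tr Tr) (S.ap (S.ap S.Cp S.B) S.Cm)) (S.ap S.B S.Cp)
      = S.comp Tr Tr

/-- A duality: `α• ∘ B = (B α) ∘ B²`, `β• ∘ B³ = B β`, `α ∘ (B β) = B I`,
`(B α) ∘ β = B I`. -/
structure IsDuality (S : BCStruct α) (al be : α) : Prop where
  arAl : S.comp (S.bul al) S.B = S.comp (S.ap S.B al) (S.pow S.B 2)
  arBe : S.comp (S.bul be) (S.pow S.B 3) = S.ap S.B be
  d1 : S.comp al (S.ap S.B be) = S.ap S.B S.I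
  d2 : S.comp (S.ap S.B al) be = S.ap S.B S.I

/-- A ribbon structure: a duality compatible with the twists. -/
structure IsRibbon (S : BCStruct α) (tp tm al be : α) : Prop where
  dual : IsDuality S al be
  dTp : S.comp al tp = S.comp al (S.ap S.B tp)
  dTm : S.comp al tm = S.comp al (S.ap S.B tm)

end BCStruct

end Paper

/-- Tightening of the trace combinator:
`a ∘ (Tr f) = Tr ((B a) ∘ f)`, `Tr (f ∘ (B b)) = (Tr f) ∘ b`, and consequently
`Tr ((B a) ∘ f ∘ (B b)) = a ∘ (Tr f) ∘ b`. -/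
theorem stmt_14 {α : Type*} (S : Paper.BCStruct α) (hS : S.IsExt)
    {tp tm Tr : α} (hBal : S.IsBalanced tp tm) (hTr : S.IsTrace tp tm Tr)
    (a f b : α) :
    S.comp a (S.ap Tr f) = S.ap Tr (S.comp (S.ap S.B a) f) ∧
    S.ap Tr (S.comp f (S.ap S.B b)) = S.comp (S.ap Tr f) b ∧
    S.ap Tr (S.comp (S.comp (S.ap S.B a) f) (S.ap S.B b))
      = S.comp (S.comp a (S.ap Tr f)) b := by
  have h1 : ∀ a f : α, S.comp a (S.ap Tr f) = S.ap Tr (S.comp (S.ap S.B a) f) := by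
    intro a f
    have := congrArg (fun x => S.ap (S.ap x a) f) hTr.leftT
    simpa [Paper.BCStruct.comp, Paper.BCStruct.pow, hS.hB, hS.hCp, hS.hI] using this
  have h2 : ∀ f b : α, S.ap Tr (S.comp f (S.ap S.B b)) = S.comp (S.ap Tr f) b := by
    intro f b
    have := congrArg (fun x => S.ap (S.ap x f) b) hTr.rightT
    simpa [Paper.BCStruct.comp, Paper.BCStruct.pow, hS.hB, hS.hCp, hS.hI] using this
  refine ⟨h1 a f, h2 f b, ?_⟩
  rw [h2, ← h1]
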